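/- If every entry of a Q×Q matrix Φ of formulas φ_{p,q}(x̄,ȳ) is expressible in first-order logic with k-ary transitive closure (FO+TC^k), then every entry of its computation closure Φ^# is also expressible in FO+TC^k. -/

import Mathlib

/-!
`Φ^#` is obtained by McNaughton–Yamada state elimination. A nonempty `Φ`-path from `p` to `q`
whose intermediate states lie in `S ∪ {r}` either avoids `r`, or splits at its first and last
visits to `r` into a path to `r`, a sequence of loops at `r`, and a path from `r`, all three
through `S`. The loops are collected by one `k`-ary transitive closure, and the pieces are
composed by quantifying a fresh tuple `z̄`; renaming along the permutation that swaps `z̄` with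
`ȳ` (resp. `x̄`) puts the middle tuple in place without capturing bound variables. Eliminating
all states gives `Φ^#`.
-/

namespace NestedPebbles

/-- Trees over a ranked alphabet `(Sig, rank)`: terms `σ(t₁,…,tₙ)` with `rank σ = n`. -/
inductive RTree (Sig : Type) (rank : Sig → ℕ) : Type
  | node (a : Sig) (children : Fin (rank a) → RTree Sig rank) : RTree Sig rank

namespace RTree

variable {Sig : Type} {rank : Sig → ℕ}

/-- The label of the root symbol. -/
def label : RTree Sig rank → Sig
  | node a _ => a

/-- The `i`-th (0-based) immediate subtree, if it exists. -/
def child : RTree Sig rank → ℕ → Option (RTree Sig rank)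
  | node a c, i => if h : i < rank a then some (c ⟨i, h⟩) else none

/-- The subtree at a position (a list of 0-based child indices, read from the root). -/
def subtree : RTree Sig rank → List ℕ → Option (RTree Sig rank)
  | t, [] => some t
  | t, i :: p => (t.child i).bind fun s => s.subtree p

end RTree

variable {Sig : Type} {rank : Sig → ℕ}

/-- `p` is (the address of) a node of `t`. -/
def IsPos (t : RTree Sig rank) (p : List ℕ) : Prop := (t.subtree p).isSome = true

/-- The type of nodes of a tree `t`, as valid positions. -/
def Pos (t : RTree Sig rank) : Type := { p : List ℕ // IsPos t p }

/-- The root node. -/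
def rootPos (t : RTree Sig rank) : Pos t := ⟨[], rfl⟩

/-- The label of the node of `t` at position `p`. -/
def labelAt (t : RTree Sig rank) (p : List ℕ) : Option Sig := (t.subtree p).map RTree.label

/-- The child number of a node: `0` for the root, and `j` for a `j`-th child (1-based). -/
def childNo (p : List ℕ) : ℕ :=
  match p.getLast? with
  | none => 0
  | some j => j + 1

/-!  ### First-order logic with k-ary transitive closure, on trees  -/

/-- First-order formulas over a ranked alphabet, with a `k`-ary transitive closure
operator.  Variables are natural numbers.  `lab a x` means `x` has label `a`;
`edg i x y` means `y` is the `i`-th child of `x` (`i` is 1-based);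
`le x y` means `x` is an ancestor of `y`; `tc xs ys φ us vs` is the transitive
closure `φ*` of `φ` with respect to the tuples of variables `xs`, `ys` (which it
binds), applied to the tuples of variables `us`, `vs`. -/
inductive TForm (Sig : Type) (rank : Sig → ℕ) (k : ℕ) : Type
  | lab (a : Sig) (x : ℕ)
  | edg (i : ℕ) (x y : ℕ)
  | le (x y : ℕ)
  | eq (x y : ℕ)
  | not (φ : TForm Sig rank k)
  | and (φ ψ : TForm Sig rank k)
  | or (φ ψ : TForm Sig rank k)
  | ex (x : ℕ) (φ : TForm Sig rank k)
  | all (x : ℕ) (φ : TForm Sig rank k)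
  | tc (xs ys : Fin k → ℕ) (φ : TForm Sig rank k) (us vs : Fin k → ℕ)

/-- Update a valuation on a tuple of variables simultaneously. -/
noncomputable def updVec {α : Type} {k : ℕ} (ν : ℕ → α) (xs : Fin k → ℕ) (a : Fin k → α) :
    ℕ → α :=
  fun n => if h : ∃ i, xs i = n then a h.choose else ν n

/-- Satisfaction of a formula in a tree `t` under a valuation of the variables by
nodes of `t`. -/
def Sat {k : ℕ} (t : RTree Sig rank) : TForm Sig rank k → (ℕ → Pos t) → Prop
  | .lab a x, ν => labelAt t (ν x).1 = some a
  | .edg i x y, ν => 1 ≤ i ∧ (ν y).1 = (ν x).1 ++ [i - 1]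
  | .le x y, ν => (ν x).1 <+: (ν y).1
  | .eq x y, ν => ν x = ν y
  | .not φ, ν => ¬ Sat t φ ν
  | .and φ ψ, ν => Sat t φ ν ∧ Sat t ψ ν
  | .or φ ψ, ν => Sat t φ ν ∨ Sat t ψ ν
  | .ex x φ, ν => ∃ u : Pos t, Sat t φ (Function.update ν x u)
  | .all x φ, ν => ∀ u : Pos t, Sat t φ (Function.update ν x u)
  | .tc xs ys φ us vs, ν =>
      Relation.ReflTransGen
        (fun a b : Fin k → Pos t => Sat t φ (updVec (updVec ν xs a) ys b))
        (fun i => ν (us i)) (fun i => ν (vs i))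

/-- The free variables of a formula. -/
def freeVars {k : ℕ} : TForm Sig rank k → Set ℕ
  | .lab _ x => {x}
  | .edg _ x y => {x, y}
  | .le x y => {x, y}
  | .eq x y => {x, y}
  | .not φ => freeVars φ
  | .and φ ψ => freeVars φ ∪ freeVars ψ
  | .or φ ψ => freeVars φ ∪ freeVars ψ
  | .ex x φ => freeVars φ \ {x}
  | .all x φ => freeVars φ \ {x}
  | .tc xs ys φ us vs =>
      (freeVars φ \ (Set.range xs ∪ Set.range ys)) ∪ Set.range us ∪ Set.range vs

/-- Two `k`-tuples of variables consist of `2k` pairwise distinct variables. -/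
def Distinct2 {k : ℕ} (xs ys : Fin k → ℕ) : Prop :=
  Function.Injective xs ∧ Function.Injective ys ∧ ∀ i j, xs i ≠ ys j

/-- `φ` is functional in the tuples of variables `xs`, `ys`: for every tree, every
valuation of the remaining variables, and every value of `xs`, there is at most one
value of `ys` satisfying `φ`. -/
def FunctionalIn {k : ℕ} (φ : TForm Sig rank k) (xs ys : Fin k → ℕ) : Prop :=
  ∀ (t : RTree Sig rank) (ν : ℕ → Pos t) (a b b' : Fin k → Pos t),
    Sat t φ (updVec (updVec ν xs a) ys b) →
    Sat t φ (updVec (updVec ν xs a) ys b') → b = b'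

/-- Well-formedness: in each transitive closure the `2k` bound variables are
pairwise distinct and occur free in the body. -/
def WF {k : ℕ} : TForm Sig rank k → Prop
  | .not φ => WF φ
  | .and φ ψ => WF φ ∧ WF ψ
  | .or φ ψ => WF φ ∧ WF ψ
  | .ex _ φ => WF φ
  | .all _ φ => WF φ
  | .tc xs ys φ _ _ =>
      Distinct2 xs ys ∧ (Set.range xs ∪ Set.range ys) ⊆ freeVars φ ∧ WF φ
  | _ => True

/-- All transitive closures occurring in the formula are deterministic, i.e., applied
to functional formulas. -/
def DetTC {k : ℕ} : TForm Sig rank k → Prop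
  | .not φ => DetTC φ
  | .and φ ψ => DetTC φ ∧ DetTC ψ
  | .or φ ψ => DetTC φ ∧ DetTC ψ
  | .ex _ φ => DetTC φ
  | .all _ φ => DetTC φ
  | .tc xs ys φ _ _ => FunctionalIn φ xs ys ∧ DetTC φ
  | _ => True

/-- All occurrences of transitive closure are positive (within the scope of an even
number of negations); the polarity parameter `b` is `true` for an even number. -/
def PosTC {k : ℕ} : Bool → TForm Sig rank k → Prop
  | b, .not φ => PosTC (!b) φ
  | b, .and φ ψ => PosTC b φ ∧ PosTC b ψ
  | b, .or φ ψ => PosTC b φ ∧ PosTC b ψ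
  | b, .ex _ φ => PosTC b φ
  | b, .all _ φ => PosTC b φ
  | b, .tc _ _ φ _ _ => b = true ∧ PosTC b φ
  | _, _ => True

/-- The formula contains no transitive closure operator (pure first-order). -/
def TCFree {k : ℕ} : TForm Sig rank k → Prop
  | .not φ => TCFree φ
  | .and φ ψ => TCFree φ ∧ TCFree ψ
  | .or φ ψ => TCFree φ ∧ TCFree ψ
  | .ex _ φ => TCFree φ
  | .all _ φ => TCFree φ
  | .tc _ _ _ _ _ => False
  | _ => True

/-- The tree language defined by a (closed) formula. -/
def treesOf {k : ℕ} (φ : TForm Sig rank k) : Set (RTree Sig rank) :=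
  {t | Sat t φ fun _ => rootPos t}

/-- `FO+DTC^k`: tree languages definable by closed first-order formulas with `k`-ary
deterministic transitive closure. -/
def FODTC (Sig : Type) (rank : Sig → ℕ) (k : ℕ) : Set (Set (RTree Sig rank)) :=
  {L | ∃ φ : TForm Sig rank k, WF φ ∧ DetTC φ ∧ freeVars φ = ∅ ∧ L = treesOf φ}

/-- `FO+TC^k`: tree languages definable by closed first-order formulas with `k`-ary
transitive closure. -/
def FOTC (Sig : Type) (rank : Sig → ℕ) (k : ℕ) : Set (Set (RTree Sig rank)) :=
  {L | ∃ φ : TForm Sig rank k, WF φ ∧ freeVars φ = ∅ ∧ L = treesOf φ}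

/-- `FO+posTC^k`: tree languages definable by closed first-order formulas in which
every occurrence of the `k`-ary transitive closure operator is positive. -/
def FOposTC (Sig : Type) (rank : Sig → ℕ) (k : ℕ) : Set (Set (RTree Sig rank)) :=
  {L | ∃ φ : TForm Sig rank k, WF φ ∧ PosTC true φ ∧ freeVars φ = ∅ ∧ L = treesOf φ}

/-!  ### k-head tree-walking automata with nested pebbles  -/

/-- Tests of a `k`-head tree-walking automaton with pebble set `X`:
label of the node under head `i`, presence of pebble `x` at head `i`, and
child number of the node under head `i`. -/
inductive TTest (Sig : Type) (k : ℕ) (X : Type) : Type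
  | lab (i : Fin k) (a : Sig)
  | peb (i : Fin k) (x : X)
  | chno (i : Fin k) (j : ℕ)

/-- Instructions: move head `i` up / down to the `j`-th child (1-based), drop a
pebble at head `i`, retrieve the most recently dropped pebble (from a distance),
or perform a positive (`b = true`) or negated (`b = false`) test. -/
inductive TInstr (Sig : Type) (k : ℕ) (X : Type) : Type
  | up (i : Fin k)
  | down (i : Fin k) (j : ℕ)
  | dropPeb (i : Fin k) (x : X)
  | retrieve (x : X)
  | test (b : Bool) (τ : TTest Sig k X)

/-- A `k`-head tree-walking automaton with nested pebbles: a finite state set `Q`,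
a finite pebble set `X`, an initial state, accepting states, and a finite set of
instructions `⟨p, χ, q⟩`. -/
structure TWA (Sig : Type) (rank : Sig → ℕ) (k : ℕ) : Type 1 where
  Q : Type
  finQ : Fintype Q
  X : Type
  finX : Fintype X
  q0 : Q
  acc : Set Q
  instr : Set (Q × TInstr Sig k X × Q)
  instrFin : instr.Finite

/-- Configurations: a state, the positions of the `k` heads, and the stack of
dropped pebbles with their positions (most recent first). -/
abbrev TConf {Sig : Type} {rank : Sig → ℕ} {k : ℕ} (A : TWA Sig rank k)
    (t : RTree Sig rank) : Type :=
  A.Q × (Fin k → Pos t) × List (A.X × Pos t)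

/-- Semantics of tests. -/
def testHolds {k : ℕ} (t : RTree Sig rank) {X : Type} (τ : TTest Sig k X)
    (hs : Fin k → Pos t) (π : List (X × Pos t)) : Prop :=
  match τ with
  | .lab i a => labelAt t (hs i).1 = some a
  | .peb i x => (x, hs i) ∈ π
  | .chno i j => childNo (hs i).1 = j

/-- Semantics of a single instruction, relating head positions and pebble stacks
before and after. -/
def instrStep {k : ℕ} (t : RTree Sig rank) {X : Type} (ins : TInstr Sig k X)
    (hs : Fin k → Pos t) (π : List (X × Pos t))
    (hs' : Fin k → Pos t) (π' : List (X × Pos t)) : Prop :=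
  match ins with
  | .up i => π' = π ∧ (∃ j : ℕ, (hs i).1 = (hs' i).1 ++ [j]) ∧ ∀ h, h ≠ i → hs' h = hs h
  | .down i j => π' = π ∧ 1 ≤ j ∧ (hs' i).1 = (hs i).1 ++ [j - 1] ∧ ∀ h, h ≠ i → hs' h = hs h
  | .dropPeb i x => hs' = hs ∧ π' = (x, hs i) :: π ∧ ∀ w, (x, w) ∉ π
  | .retrieve x => hs' = hs ∧ ∃ w, π = (x, w) :: π'
  | .test b τ => hs' = hs ∧ π' = π ∧ (testHolds t τ hs π ↔ b = true)

/-- The step relation of automaton `A` on tree `t`. -/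
def Step {k : ℕ} (A : TWA Sig rank k) (t : RTree Sig rank) :
    TConf A t → TConf A t → Prop :=
  fun c c' => ∃ ins : TInstr Sig k A.X,
    (c.1, ins, c'.1) ∈ A.instr ∧ instrStep t ins c.2.1 c.2.2 c'.2.1 c'.2.2

/-- `χ'` is the negation of the test `χ`. -/
def negOf {k : ℕ} {X : Type} (χ χ' : TInstr Sig k X) : Prop :=
  ∃ b τ, χ = TInstr.test b τ ∧ χ' = TInstr.test (!b) τ

/-- Determinism: any two distinct instructions with the same source state consist
of a test and its negation. -/
def Deterministic {k : ℕ} (A : TWA Sig rank k) : Prop :=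
  ∀ p χ₁ q₁ χ₂ q₂, (p, χ₁, q₁) ∈ A.instr → (p, χ₂, q₂) ∈ A.instr →
    (χ₁, q₁) ≠ (χ₂, q₂) → negOf χ₁ χ₂ ∨ negOf χ₂ χ₁

/-- The initial configuration: initial state, all heads at the root, no pebbles. -/
def initConf {k : ℕ} (A : TWA Sig rank k) (t : RTree Sig rank) : TConf A t :=
  (A.q0, fun _ => rootPos t, [])

/-- A configuration is halting if no step is possible from it. -/
def HaltingConf {k : ℕ} (A : TWA Sig rank k) (t : RTree Sig rank) (c : TConf A t) : Prop :=
  ∀ c', ¬ Step A t c c'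

/-- Acceptance: some computation from the initial configuration halts in an
accepting state with all heads at the root and no pebbles on the tree. -/
def Accepts {k : ℕ} (A : TWA Sig rank k) (t : RTree Sig rank) : Prop :=
  ∃ q ∈ A.acc,
    Relation.ReflTransGen (Step A t) (initConf A t) (q, fun _ => rootPos t, []) ∧
    HaltingConf A t (q, fun _ => rootPos t, [])

/-- The tree language accepted by `A`. -/
def Lang {k : ℕ} (A : TWA Sig rank k) : Set (RTree Sig rank) := {t | Accepts A t}

/-- The automaton uses no pebbles at all. -/
def PebbleFree {k : ℕ} (A : TWA Sig rank k) : Prop :=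
  ∀ p χ q, (p, χ, q) ∈ A.instr →
    (∀ i x, χ ≠ TInstr.dropPeb i x) ∧ (∀ x, χ ≠ TInstr.retrieve x) ∧
    (∀ b i x, χ ≠ TInstr.test b (TTest.peb i x))

/-- `DPTWA^k`: tree languages accepted by deterministic `k`-head tree-walking
automata with nested pebbles. -/
def DPTWA (Sig : Type) (rank : Sig → ℕ) (k : ℕ) : Set (Set (RTree Sig rank)) :=
  {L | ∃ A : TWA Sig rank k, Deterministic A ∧ L = Lang A}

/-- `NPTWA^k`: tree languages accepted by nondeterministic `k`-head tree-walking
automata with nested pebbles. -/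
def NPTWA (Sig : Type) (rank : Sig → ℕ) (k : ℕ) : Set (Set (RTree Sig rank)) :=
  {L | ∃ A : TWA Sig rank k, L = Lang A}

/-- `NTWA^k`: tree languages accepted by nondeterministic `k`-head tree-walking
automata without pebbles. -/
def NTWA (Sig : Type) (rank : Sig → ℕ) (k : ℕ) : Set (Set (RTree Sig rank)) :=
  {L | ∃ A : TWA Sig rank k, PebbleFree A ∧ L = Lang A}

end NestedPebbles

namespace NestedPebbles

variable {Sig : Type} {rank : Sig → ℕ} {k : ℕ}

/-- One step of the matrix `Φ` of formulas: from state `p` with head tuple `a` to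
state `q` with head tuple `b`, provided `φ_{p,q}(a,b)` holds (the remaining free
variables being valuated by `ν`). -/
def MStep {Q : Type} (Φ : Q → Q → TForm Sig rank k) (xs ys : Fin k → ℕ)
    (t : RTree Sig rank) (ν : ℕ → Pos t) :
    Q × (Fin k → Pos t) → Q × (Fin k → Pos t) → Prop :=
  fun c c' => Sat t (Φ c.1 c'.1) (updVec (updVec ν xs c.2) ys c'.2)

/-- The computation closure `Φ^#` of the matrix `Φ`, as a semantic relation:
`φ^#_{p,q}(ā,b̄)` holds iff there is a nonempty `Φ`-path from `(p,ā)` to `(q,b̄)`. -/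
def CompClosure {Q : Type} (Φ : Q → Q → TForm Sig rank k) (xs ys : Fin k → ℕ)
    (t : RTree Sig rank) (ν : ℕ → Pos t) (p q : Q) (a b : Fin k → Pos t) : Prop :=
  Relation.TransGen (MStep Φ xs ys t ν) (p, a) (q, b)

/-- The matrix `Φ` is deterministic: its entries are jointly functional and
exclusive. -/
def DetMatrix {Q : Type} (Φ : Q → Q → TForm Sig rank k) (xs ys : Fin k → ℕ) : Prop :=
  ∀ (t : RTree Sig rank) (ν : ℕ → Pos t) (p q q' : Q) (a b b' : Fin k → Pos t),
    Sat t (Φ p q) (updVec (updVec ν xs a) ys b) →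
    Sat t (Φ p q') (updVec (updVec ν xs a) ys b') → q = q' ∧ b = b'

/-- `q` is a final state of the matrix `Φ`: all entries `φ_{q,r}` are false. -/
def FinalState {Q : Type} (Φ : Q → Q → TForm Sig rank k) (xs ys : Fin k → ℕ)
    (q : Q) : Prop :=
  ∀ (r : Q) (t : RTree Sig rank) (ν : ℕ → Pos t) (a b : Fin k → Pos t),
    ¬ Sat t (Φ q r) (updVec (updVec ν xs a) ys b)

/-- `q` is a final state of the computation closure `Φ^#`: all entries
`φ^#_{q,r}` are false. -/
def FinalForClosure {Q : Type} (Φ : Q → Q → TForm Sig rank k) (xs ys : Fin k → ℕ)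
    (q : Q) : Prop :=
  ∀ (r : Q) (t : RTree Sig rank) (ν : ℕ → Pos t) (a b : Fin k → Pos t),
    ¬ CompClosure Φ xs ys t ν q r a b

end NestedPebbles

namespace NestedPebbles

section UpdVec

variable {α : Type} {k : ℕ} (ν : ℕ → α) {xs ys : Fin k → ℕ} (a b : Fin k → α)

theorem updVec_apply (hxs : Function.Injective xs) (i : Fin k) :
    updVec ν xs a (xs i) = a i := by
  have h : ∃ j, xs j = xs i := ⟨i, rfl⟩
  rw [updVec, dif_pos h, hxs h.choose_spec]

theorem updVec_apply_of_notMem {n : ℕ} (hn : n ∉ Set.range xs) : updVec ν xs a n = ν n :=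
  dif_neg hn

theorem updVec_apply_congr {ν' : ℕ → α} {n : ℕ} (h : n ∉ Set.range xs → ν n = ν' n) :
    updVec ν xs a n = updVec ν' xs a n := by
  unfold updVec
  split_ifs with hn
  · rfl
  · exact h hn

theorem updVec_updVec_same : updVec (updVec ν xs a) xs b = updVec ν xs b :=
  funext fun _ => updVec_apply_congr _ _ fun hn => updVec_apply_of_notMem ν a hn

theorem updVec_comm (hxy : ∀ i j, xs i ≠ ys j) :
    updVec (updVec ν xs a) ys b = updVec (updVec ν ys b) xs a := by
  funext n
  by_cases hy : n ∈ Set.range ys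
  · obtain ⟨i, rfl⟩ := hy
    have hx : ys i ∉ Set.range xs := by rintro ⟨j, hj⟩; exact hxy j i hj
    rw [updVec_apply_of_notMem _ _ hx]
    exact updVec_apply_congr _ _ fun h => (h ⟨i, rfl⟩).elim
  · rw [updVec_apply_of_notMem _ _ hy]
    exact updVec_apply_congr _ _ fun _ => (updVec_apply_of_notMem ν b hy).symm

theorem updVec_fin_zero (xs : Fin 0 → ℕ) (c : Fin 0 → α) : updVec ν xs c = ν :=
  funext fun _ => updVec_apply_of_notMem ν c fun ⟨i, _⟩ => i.elim0

theorem updVec_update_tail {m : ℕ} {zs : Fin (m + 1) → ℕ} (hz : Function.Injective zs)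
    (u : α) (c : Fin m → α) :
    updVec (Function.update ν (zs 0) u) (Fin.tail zs) c = updVec ν zs (Fin.cons u c) := by
  have htail : Function.Injective (Fin.tail zs) := hz.comp (Fin.succ_injective _)
  funext n
  by_cases hn : n ∈ Set.range zs
  · obtain ⟨j, rfl⟩ := hn
    rw [updVec_apply ν _ hz]
    cases j using Fin.cases with
    | zero =>
        rw [updVec_apply_of_notMem (xs := Fin.tail zs) _ c
          fun ⟨i, hi⟩ => Fin.succ_ne_zero i (hz hi)]
        simp
    | succ i => exact updVec_apply _ c htail i
  · have hn' : n ∉ Set.range (Fin.tail zs) := fun ⟨i, hi⟩ => hn ⟨i.succ, hi⟩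
    rw [updVec_apply_of_notMem _ _ hn, updVec_apply_of_notMem _ _ hn',
      Function.update_of_ne fun h => hn ⟨0, h.symm⟩]

end UpdVec

variable {Sig : Type} {rank : Sig → ℕ} {k : ℕ}

theorem freeVars_finite (φ : TForm Sig rank k) : (freeVars φ).Finite := by
  induction φ with
  | lab => exact Set.finite_singleton _
  | edg | le | eq => exact (Set.finite_singleton _).insert _
  | not _ ih | ex _ _ ih | all _ _ ih => first | exact ih | exact ih.sdiff
  | and _ _ ih ih' | or _ _ ih ih' => exact ih.union ih'
  | tc _ _ _ us vs ih => exact (ih.sdiff.union (Set.finite_range us)).union (Set.finite_range vs)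

theorem sat_congr (t : RTree Sig rank) (φ : TForm Sig rank k) {ν ν' : ℕ → Pos t}
    (h : Set.EqOn ν ν' (freeVars φ)) : Sat t φ ν ↔ Sat t φ ν' := by
  induction φ generalizing ν ν' with
  | lab a x => simp only [Sat, h (Set.mem_singleton x)]
  | edg i x y | le x y | eq x y =>
      simp only [Sat, h (Set.mem_insert x _), h (Set.mem_insert_of_mem x (Set.mem_singleton y))]
  | not φ ih => exact not_congr (ih h)
  | and φ ψ ih ih' =>
      exact and_congr (ih (h.mono Set.subset_union_left)) (ih' (h.mono Set.subset_union_right))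
  | or φ ψ ih ih' =>
      exact or_congr (ih (h.mono Set.subset_union_left)) (ih' (h.mono Set.subset_union_right))
  | ex x φ ih | all x φ ih =>
      first
      | refine exists_congr fun u => ih fun n hn => ?_
      | refine forall_congr' fun u => ih fun n hn => ?_
      by_cases hx : n = x
      · subst hx; simp
      · simp only [Function.update_of_ne hx]
        exact h ⟨hn, hx⟩
  | tc xs ys φ us vs ih =>
      have hrel : (fun a b : Fin k → Pos t => Sat t φ (updVec (updVec ν xs a) ys b))
          = fun a b => Sat t φ (updVec (updVec ν' xs a) ys b) :=
        funext₂ fun a b => propext <| ih fun n hn =>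
          updVec_apply_congr _ b fun hy => updVec_apply_congr _ a fun hx =>
            h (Or.inl (Or.inl ⟨hn, fun hxy => hxy.elim hx hy⟩))
      have hus : (fun i => ν (us i)) = fun i => ν' (us i) :=
        funext fun i => h (Or.inl (Or.inr ⟨i, rfl⟩))
      have hvs : (fun i => ν (vs i)) = fun i => ν' (vs i) :=
        funext fun i => h (Or.inr ⟨i, rfl⟩)
      simp only [Sat, hrel, hus, hvs]

/-- Bound variables are renamed too, so for injective `σ` no capture can occur. -/
def rename (σ : ℕ → ℕ) : TForm Sig rank k → TForm Sig rank k
  | .lab a x => .lab a (σ x)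
  | .edg i x y => .edg i (σ x) (σ y)
  | .le x y => .le (σ x) (σ y)
  | .eq x y => .eq (σ x) (σ y)
  | .not φ => .not (rename σ φ)
  | .and φ ψ => .and (rename σ φ) (rename σ ψ)
  | .or φ ψ => .or (rename σ φ) (rename σ ψ)
  | .ex x φ => .ex (σ x) (rename σ φ)
  | .all x φ => .all (σ x) (rename σ φ)
  | .tc xs ys φ us vs => .tc (σ ∘ xs) (σ ∘ ys) (rename σ φ) (σ ∘ us) (σ ∘ vs)

section Rename

variable {σ : ℕ → ℕ}

theorem updVec_comp (hσ : Function.Injective σ) {α : Type} (ν : ℕ → α) (xs : Fin k → ℕ) (a : Fin k → α) :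
    updVec ν (σ ∘ xs) a ∘ σ = updVec (ν ∘ σ) xs a := by
  funext n
  simp only [updVec, Function.comp_apply, hσ.eq_iff]

theorem sat_rename (hσ : Function.Injective σ) (t : RTree Sig rank) (φ : TForm Sig rank k) (ν : ℕ → Pos t) :
    Sat t (rename σ φ) ν ↔ Sat t φ (ν ∘ σ) := by
  induction φ generalizing ν with
  | lab | edg | le | eq => simp [rename, Sat]
  | not φ ih => exact not_congr (ih ν)
  | and φ ψ ih ih' => exact and_congr (ih ν) (ih' ν)
  | or φ ψ ih ih' => exact or_congr (ih ν) (ih' ν)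
  | ex x φ ih => exact exists_congr fun u => by rw [ih, Function.update_comp_eq_of_injective _ hσ]
  | all x φ ih => exact forall_congr' fun u => by rw [ih, Function.update_comp_eq_of_injective _ hσ]
  | tc xs ys φ us vs ih =>
      simp only [rename, Sat, ih, updVec_comp hσ]
      rfl

theorem sat_rename_iff_of_eqOn (hσ : Function.Injective σ) (t : RTree Sig rank) (φ : TForm Sig rank k)
    {ν μ : ℕ → Pos t} (h : Set.EqOn (ν ∘ σ) μ (freeVars φ)) :
    Sat t (rename σ φ) ν ↔ Sat t φ μ :=
  (sat_rename hσ t φ ν).trans (sat_congr t φ h)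

theorem freeVars_rename (hσ : Function.Injective σ) (φ : TForm Sig rank k) :
    freeVars (rename σ φ) = σ '' freeVars φ := by
  induction φ with
  | lab | edg | le | eq => simp [rename, freeVars, Set.image_insert_eq]
  | not φ ih => exact ih
  | and φ ψ ih ih' | or φ ψ ih ih' => simp only [rename, freeVars, ih, ih', Set.image_union]
  | ex x φ ih | all x φ ih =>
      simp only [rename, freeVars, ih, Set.image_sdiff hσ, Set.image_singleton]
  | tc xs ys φ us vs ih =>
      simp only [rename, freeVars, ih, Set.range_comp, Set.image_union, Set.image_sdiff hσ]

theorem wf_rename (hσ : Function.Injective σ) {φ : TForm Sig rank k} (h : WF φ) : WF (rename σ φ) := by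
  induction φ with
  | lab | edg | le | eq => trivial
  | not φ ih | ex _ φ ih | all _ φ ih => exact ih h
  | and φ ψ ih ih' | or φ ψ ih ih' => exact ⟨ih h.1, ih' h.2⟩
  | tc xs ys φ us vs ih =>
      obtain ⟨⟨hx, hy, hxy⟩, hsub, hwf⟩ := h
      refine ⟨⟨hσ.comp hx, hσ.comp hy, fun i j h => hxy i j (hσ h)⟩, ?_, ih hwf⟩
      rw [freeVars_rename hσ, Set.range_comp, Set.range_comp, ← Set.image_union]
      exact Set.image_mono hsub

end Rename

noncomputable def swapVars (ys zs : Fin k → ℕ) : ℕ → ℕ := updVec (updVec id ys zs) zs ys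

section SwapVars

variable {ys zs : Fin k → ℕ}

theorem swapVars_left (h : Distinct2 ys zs) (i : Fin k) : swapVars ys zs (ys i) = zs i := by
  rw [swapVars, updVec_apply_of_notMem _ _ fun ⟨j, hj⟩ => h.2.2 i j hj.symm]
  exact updVec_apply id zs h.1 i

theorem swapVars_right (hz : Function.Injective zs) (i : Fin k) :
    swapVars ys zs (zs i) = ys i :=
  updVec_apply _ ys hz i

theorem swapVars_of_notMem {n : ℕ} (hy : n ∉ Set.range ys) (hz : n ∉ Set.range zs) :
    swapVars ys zs n = n := by
  rw [swapVars, updVec_apply_of_notMem _ _ hz, updVec_apply_of_notMem _ _ hy, id]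

theorem swapVars_involutive (h : Distinct2 ys zs) : Function.Involutive (swapVars ys zs) := by
  intro n
  by_cases hy : n ∈ Set.range ys
  · obtain ⟨i, rfl⟩ := hy
    rw [swapVars_left h, swapVars_right h.2.1]
  by_cases hz : n ∈ Set.range zs
  · obtain ⟨i, rfl⟩ := hz
    rw [swapVars_right h.2.1, swapVars_left h]
  rw [swapVars_of_notMem hy hz, swapVars_of_notMem hy hz]

theorem swapVars_injective (h : Distinct2 ys zs) : Function.Injective (swapVars ys zs) :=
  (swapVars_involutive h).injective

theorem updVec_updVec_swapVars {α : Type} (h : Distinct2 ys zs) (ν : ℕ → α)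
    (b c : Fin k → α) {n : ℕ} (hn : n ∉ Set.range zs) :
    updVec (updVec ν ys b) zs c (swapVars ys zs n) = updVec ν ys c n := by
  by_cases hy : n ∈ Set.range ys
  · obtain ⟨i, rfl⟩ := hy
    rw [swapVars_left h, updVec_apply _ c h.2.1, updVec_apply _ c h.1]
  · rw [swapVars_of_notMem hy hn, updVec_apply_of_notMem _ _ hn, updVec_apply_of_notMem _ _ hy,
      updVec_apply_of_notMem _ _ hy]

end SwapVars

def exTuple : {m : ℕ} → (Fin m → ℕ) → TForm Sig rank k → TForm Sig rank k
  | 0, _, φ => φ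
  | _ + 1, zs, φ => .ex (zs 0) (exTuple (Fin.tail zs) φ)

theorem sat_exTuple (t : RTree Sig rank) {m : ℕ} {zs : Fin m → ℕ} (hz : Function.Injective zs)
    (φ : TForm Sig rank k) (ν : ℕ → Pos t) :
    Sat t (exTuple zs φ) ν ↔ ∃ c : Fin m → Pos t, Sat t φ (updVec ν zs c) := by
  induction m generalizing ν with
  | zero => simp only [exTuple, updVec_fin_zero, exists_const]
  | succ m ih =>
      simp only [exTuple, Sat, Fin.exists_fin_succ_pi, ← updVec_update_tail _ hz]
      exact exists_congr fun u => ih (hz.comp (Fin.succ_injective _)) _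

theorem freeVars_exTuple {m : ℕ} (zs : Fin m → ℕ) (φ : TForm Sig rank k) :
    freeVars (exTuple zs φ) = freeVars φ \ Set.range zs := by
  induction m with
  | zero => simp [exTuple, Set.range_eq_empty]
  | succ m ih =>
      conv_rhs => rw [← Fin.cons_self_tail zs, Fin.range_cons]
      simp only [exTuple, freeVars, ih, Set.sdiff_sdiff, Set.union_comm, Set.insert_eq]

theorem wf_exTuple {m : ℕ} (zs : Fin m → ℕ) {φ : TForm Sig rank k} (h : WF φ) :
    WF (exTuple zs φ) := by
  induction m with
  | zero => exact h
  | succ m ih => exact ih _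

def padFree (l : List ℕ) (φ : TForm Sig rank k) : TForm Sig rank k :=
  l.foldr (fun x ψ => .and ψ (.eq x x)) φ

theorem sat_padFree (t : RTree Sig rank) (l : List ℕ) (φ : TForm Sig rank k) (ν : ℕ → Pos t) :
    Sat t (padFree l φ) ν ↔ Sat t φ ν := by
  induction l with
  | nil => rfl
  | cons x l ih => simpa only [padFree, List.foldr_cons, Sat, and_true] using ih

theorem freeVars_padFree (l : List ℕ) (φ : TForm Sig rank k) :
    freeVars (padFree l φ) = freeVars φ ∪ {x | x ∈ l} := by
  induction l with
  | nil => simp [padFree]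
  | cons x l ih =>
      ext n
      simp only [padFree, List.foldr_cons, freeVars] at ih ⊢
      simp only [ih, Set.mem_union, Set.mem_insert_iff, Set.mem_singleton_iff, or_self,
        Set.mem_ofPred_eq, List.mem_cons]
      tauto

theorem wf_padFree (l : List ℕ) {φ : TForm Sig rank k} (h : WF φ) : WF (padFree l φ) := by
  induction l with
  | nil => exact h
  | cons x l ih => exact ⟨ih, trivial⟩

theorem sat_tc_updVec (t : RTree Sig rank) {xs ys : Fin k → ℕ} (hd : Distinct2 xs ys)
    (φ : TForm Sig rank k) (ν : ℕ → Pos t) (a b : Fin k → Pos t) :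
    Sat t (.tc xs ys φ xs ys) (updVec (updVec ν xs a) ys b) ↔
      Relation.ReflTransGen (fun c d => Sat t φ (updVec (updVec ν xs c) ys d)) a b := by
  obtain ⟨hx, hy, hxy⟩ := hd
  have ha : (fun i => updVec (updVec ν xs a) ys b (xs i)) = a := funext fun i => by
    rw [updVec_apply_of_notMem _ _ fun ⟨j, hj⟩ => hxy i j hj.symm, updVec_apply _ _ hx]
  have hb : (fun i => updVec (updVec ν xs a) ys b (ys i)) = b :=
    funext (updVec_apply _ _ hy)
  simp only [Sat, ha, hb, ← updVec_comm _ _ _ hxy, updVec_updVec_same]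

/-- The relational composition `∃ z̄. φ(x̄, z̄) ∧ ψ(z̄, ȳ)`. -/
noncomputable def relComp (xs ys zs : Fin k → ℕ) (φ ψ : TForm Sig rank k) : TForm Sig rank k :=
  exTuple zs (.and (rename (swapVars ys zs) φ) (rename (swapVars xs zs) ψ))

section RelComp

variable {xs ys zs : Fin k → ℕ}

theorem sat_relComp (t : RTree Sig rank) (hxy : Distinct2 xs ys) (hxz : Distinct2 xs zs)
    (hyz : Distinct2 ys zs) {φ ψ : TForm Sig rank k}
    (hφ : ∀ i, zs i ∉ freeVars φ) (hψ : ∀ i, zs i ∉ freeVars ψ)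
    (ν : ℕ → Pos t) (a b : Fin k → Pos t) :
    Sat t (relComp xs ys zs φ ψ) (updVec (updVec ν xs a) ys b) ↔
      ∃ c, Sat t φ (updVec (updVec ν xs a) ys c) ∧ Sat t ψ (updVec (updVec ν xs c) ys b) := by
  rw [relComp, sat_exTuple t hyz.2.1]
  refine exists_congr fun c => and_congr ?_ ?_
  · refine sat_rename_iff_of_eqOn (swapVars_injective hyz) t φ fun n hn => ?_
    exact updVec_updVec_swapVars hyz _ b c fun ⟨i, hi⟩ => hφ i (hi ▸ hn)
  · refine sat_rename_iff_of_eqOn (swapVars_injective hxz) t ψ fun n hn => ?_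
    simp only [Function.comp_apply, updVec_comm ν _ _ hxy.2.2]
    exact updVec_updVec_swapVars hxz _ a c fun ⟨i, hi⟩ => hψ i (hi ▸ hn)

theorem notMem_freeVars_relComp (φ ψ : TForm Sig rank k) (i : Fin k) :
    zs i ∉ freeVars (relComp xs ys zs φ ψ) := by
  rw [relComp, freeVars_exTuple]
  exact fun h => h.2 ⟨i, rfl⟩

theorem wf_relComp (hxz : Distinct2 xs zs) (hyz : Distinct2 ys zs) {φ ψ : TForm Sig rank k}
    (hφ : WF φ) (hψ : WF ψ) : WF (relComp xs ys zs φ ψ) :=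
  wf_exTuple _ ⟨wf_rename (swapVars_injective hyz) hφ, wf_rename (swapVars_injective hxz) hψ⟩

end RelComp

inductive PathThrough {Q α : Type} (R : Q × α → Q × α → Prop) (S : Set Q) :
    Q × α → Q × α → Prop
  | single {x y} : R x y → PathThrough R S x y
  | cons {x y z} : R x y → y.1 ∈ S → PathThrough R S y z → PathThrough R S x z

namespace PathThrough

variable {Q α : Type} {R : Q × α → Q × α → Prop} {S : Set Q}

theorem mono {S' : Set Q} (hS : S ⊆ S') {x y : Q × α} (h : PathThrough R S x y) :
    PathThrough R S' x y := by
  induction h with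
  | single h => exact .single h
  | cons h hy _ ih => exact .cons h (hS hy) ih

theorem trans {x y z : Q × α} (hxy : PathThrough R S x y) (hy : y.1 ∈ S)
    (hyz : PathThrough R S y z) : PathThrough R S x z := by
  induction hxy with
  | single h => exact .cons h hy hyz
  | cons h hS _ ih => exact .cons h hS (ih hy hyz)

theorem iff_of_empty {x y : Q × α} : PathThrough R ∅ x y ↔ R x y :=
  ⟨fun | .single h => h | .cons _ hy _ => hy.elim, .single⟩

theorem iff_transGen {x y : Q × α} : PathThrough R Set.univ x y ↔ Relation.TransGen R x y := by
  refine ⟨fun h => ?_, fun h => ?_⟩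
  · induction h with
    | single h => exact .single h
    | cons h _ _ ih => exact .head h ih
  · induction h using Relation.TransGen.head_induction_on with
    | single h => exact .single h
    | head h _ ih => exact .cons h trivial ih

theorem iff_insert {r : Q} {x y : Q × α} :
    PathThrough R (insert r S) x y ↔ PathThrough R S x y ∨ ∃ c d,
      PathThrough R S x (r, c) ∧
      Relation.ReflTransGen (fun c d => PathThrough R S (r, c) (r, d)) c d ∧
      PathThrough R S (r, d) y := by
  constructor
  · intro h
    induction h with
    | single h => exact .inl (.single h)
    | @cons x y z h hy _ ih =>
        obtain ⟨q, c⟩ := y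
        rcases hy with rfl | hy
        · refine .inr ?_
          rcases ih with h' | ⟨c', d, h₁, hloop, h₂⟩
          · exact ⟨c, c, .single h, .refl, h'⟩
          · exact ⟨c, d, .single h, .head h₁ hloop, h₂⟩
        · rcases ih with h' | ⟨c', d, h₁, hloop, h₂⟩
          · exact .inl (.cons h hy h')
          · exact .inr ⟨c', d, .cons h hy h₁, hloop, h₂⟩
  · have hS : S ⊆ insert r S := Set.subset_insert r S
    rintro (h | ⟨c, d, h₁, hloop, h₂⟩)
    · exact h.mono hS
    · have h₁' : PathThrough R (insert r S) x (r, d) := by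
        clear h₂
        induction hloop with
        | refl => exact h₁.mono hS
        | tail _ h ih => exact ih.trans (Set.mem_insert r S) (h.mono hS)
      exact h₁'.trans (Set.mem_insert r S) (h₂.mono hS)

end PathThrough

noncomputable def pathFormula {Q : Type} (Φ : Q → Q → TForm Sig rank k) (xs ys zs : Fin k → ℕ) :
    List Q → Q → Q → TForm Sig rank k
  | [], p, q => padFree (List.ofFn xs ++ List.ofFn ys) (Φ p q)
  | r :: l, p, q => .or (pathFormula Φ xs ys zs l p q)
      (relComp xs ys zs (pathFormula Φ xs ys zs l p r)
        (relComp xs ys zs (.tc xs ys (pathFormula Φ xs ys zs l r r) xs ys)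
          (pathFormula Φ xs ys zs l r q)))

section PathFormula

variable {Q : Type} (Φ : Q → Q → TForm Sig rank k) {xs ys zs : Fin k → ℕ}

theorem subset_freeVars_pathFormula (l : List Q) (p q : Q) :
    Set.range xs ∪ Set.range ys ⊆ freeVars (pathFormula Φ xs ys zs l p q) := by
  cases l with
  | nil =>
      rw [pathFormula, freeVars_padFree]
      rintro n (⟨i, rfl⟩ | ⟨i, rfl⟩) <;> right <;> simp
  | cons r l => exact (subset_freeVars_pathFormula l p q).trans Set.subset_union_left

theorem wf_pathFormula (hxy : Distinct2 xs ys) (hxz : Distinct2 xs zs) (hyz : Distinct2 ys zs)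
    (hwf : ∀ p q, WF (Φ p q)) (l : List Q) (p q : Q) : WF (pathFormula Φ xs ys zs l p q) := by
  induction l generalizing p q with
  | nil => exact wf_padFree _ (hwf p q)
  | cons r l ih =>
      refine ⟨ih p q, wf_relComp hxz hyz (ih p r) (wf_relComp hxz hyz ?_ (ih r q))⟩
      exact ⟨hxy, subset_freeVars_pathFormula Φ l r r, ih r r⟩

theorem notMem_freeVars_pathFormula (hxz : ∀ i j, xs i ≠ zs j) (hyz : ∀ i j, ys i ≠ zs j)
    (hΦ : ∀ i p q, zs i ∉ freeVars (Φ p q)) (l : List Q) (p q : Q) (i : Fin k) :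
    zs i ∉ freeVars (pathFormula Φ xs ys zs l p q) := by
  cases l with
  | nil =>
      rw [pathFormula, freeVars_padFree]
      rintro (h | h)
      · exact hΦ i p q h
      · simp only [Set.mem_ofPred_eq, List.mem_append, List.mem_ofFn'] at h
        rcases h with ⟨j, hj⟩ | ⟨j, hj⟩
        exacts [hxz j i hj, hyz j i hj]
  | cons r l =>
      rintro (h | h)
      · exact notMem_freeVars_pathFormula hxz hyz hΦ l p q i h
      · exact notMem_freeVars_relComp _ _ i h

theorem sat_pathFormula (hxy : Distinct2 xs ys) (hxz : Distinct2 xs zs) (hyz : Distinct2 ys zs)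
    (hΦ : ∀ i p q, zs i ∉ freeVars (Φ p q)) (t : RTree Sig rank) (ν : ℕ → Pos t)
    (l : List Q) (p q : Q) (a b : Fin k → Pos t) :
    Sat t (pathFormula Φ xs ys zs l p q) (updVec (updVec ν xs a) ys b) ↔
      PathThrough (MStep Φ xs ys t ν) {x | x ∈ l} (p, a) (q, b) := by
  have hfree := notMem_freeVars_pathFormula Φ hxz.2.2 hyz.2.2 hΦ
  induction l generalizing p q a b with
  | nil =>
      rw [pathFormula, sat_padFree, show {x : Q | x ∈ []} = ∅ by simp, PathThrough.iff_of_empty]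
      rfl
  | cons r l ih =>
      have hloop : ∀ i, zs i ∉ freeVars (.tc xs ys (pathFormula Φ xs ys zs l r r) xs ys) := by
        rintro i ((⟨h, -⟩ | ⟨j, hj⟩) | ⟨j, hj⟩)
        exacts [hfree l r r i h, hxz.2.2 j i hj, hyz.2.2 j i hj]
      rw [show {x | x ∈ r :: l} = insert r {x | x ∈ l} from Set.ext fun _ => List.mem_cons,
        PathThrough.iff_insert, pathFormula, Sat,
        sat_relComp t hxy hxz hyz (hfree l p r) (notMem_freeVars_relComp _ _)]
      simp only [sat_relComp t hxy hxz hyz hloop (hfree l r q), sat_tc_updVec t hxy, ih,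
        exists_and_left]

end PathFormula

theorem exists_injective_forall_notMem {α : Type} [Infinite α] {s : Set α} (hs : s.Finite)
    (k : ℕ) : ∃ zs : Fin k → α, Function.Injective zs ∧ ∀ i, zs i ∉ s := by
  let e := hs.infinite_compl.natEmbedding
  exact ⟨fun i => e i, fun i j h => Fin.val_injective (e.injective (Subtype.val_injective h)),
    fun i => (e i).2⟩

theorem compClosure_in_FOTC_general (Sig : Type) (rank : Sig → ℕ)
    (k : ℕ) (Q : Type) [Fintype Q]
    (Φ : Q → Q → TForm Sig rank k) (xs ys : Fin k → ℕ)
    (hdist : Distinct2 xs ys) (hwf : ∀ p q, WF (Φ p q)) :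
    ∃ Ψ : Q → Q → TForm Sig rank k,
      (∀ p q, WF (Ψ p q)) ∧
      ∀ (p q : Q) (t : RTree Sig rank) (ν : ℕ → Pos t) (a b : Fin k → Pos t),
        Sat t (Ψ p q) (updVec (updVec ν xs a) ys b) ↔
          CompClosure Φ xs ys t ν p q a b := by
  obtain ⟨zs, hz, hfresh⟩ := exists_injective_forall_notMem
    (((Set.finite_range xs).union (Set.finite_range ys)).union
      (Set.finite_iUnion fun p => Set.finite_iUnion fun q => freeVars_finite (Φ p q))) k
  have hxz : Distinct2 xs zs := ⟨hdist.1, hz, fun i j h => hfresh j (by simp [← h])⟩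
  have hyz : Distinct2 ys zs := ⟨hdist.2.1, hz, fun i j h => hfresh j (by simp [← h])⟩
  have hΦ : ∀ i p q, zs i ∉ freeVars (Φ p q) := fun i p q h =>
    hfresh i (Or.inr (Set.mem_iUnion₂.2 ⟨p, q, h⟩))
  refine ⟨pathFormula Φ xs ys zs Finset.univ.toList,
    wf_pathFormula Φ hdist hxz hyz hwf _, fun p q t ν a b => ?_⟩
  rw [sat_pathFormula Φ hdist hxz hyz hΦ,
    show {x | x ∈ Finset.univ.toList} = Set.univ by simp, PathThrough.iff_transGen]
  rfl

/-- Lemma 2(2). If every entry of the matrix `Φ` is a formula of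
`FO+TC^k`, then every entry of the computation closure `Φ^#` is expressible in
`FO+TC^k`: there is a matrix `Ψ` of (well-formed) `FO+TC^k` formulas whose
semantics is exactly the computation-closure relation of `Φ`. -/
theorem compClosure_in_FOTC (Sig : Type) [Fintype Sig] (rank : Sig → ℕ)
    (k : ℕ) (hk : 1 ≤ k) (Q : Type) [Fintype Q]
    (Φ : Q → Q → TForm Sig rank k) (xs ys : Fin k → ℕ)
    (hdist : Distinct2 xs ys) (hwf : ∀ p q, WF (Φ p q)) :
    ∃ Ψ : Q → Q → TForm Sig rank k,
      (∀ p q, WF (Ψ p q)) ∧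
      ∀ (p q : Q) (t : RTree Sig rank) (ν : ℕ → Pos t) (a b : Fin k → Pos t),
        Sat t (Ψ p q) (updVec (updVec ν xs a) ys b) ↔
          CompClosure Φ xs ys t ν p q a b :=
  compClosure_in_FOTC_general Sig rank k Q Φ xs ys hdist hwf

end NestedPebbles
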